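/- arXiv:1606.08529 — 2 statements merged into one kernel-verified Lean document; each statement's English description precedes it below -/
import Mathlib

section
/- Let R be a (possibly noncommutative) unital ring. The symmetrized determinant SymDet, defined on an l×l matrix m = (m_{ij}) with entries in R by SymDet(m) = Σ_{σ ∈ Sym_l} (-1)^σ · (m_{1σ(1)} ⊙ ⋯ ⊙ m_{lσ(l)}), where r_1 ⊙ ⋯ ⊙ r_l := (1/l!) Σ_{σ' ∈ Sym_l} r_{σ'(1)} ⋯ r_{σ'(l)} is the symmetrized product, is alternating in the rows of m: if two rows of m are equal, then SymDet(m) = 0, and interchanging two rows of m changes the sign of SymDet(m). -/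
/-!
The symmetrized product is invariant under permuting its factors, so permuting the rows of `m`
by `τ` only reindexes the outer sum by `σ ↦ σ * τ`, which multiplies `symDet m` by `sign τ`.
If two rows agree, swapping them gives `symDet m = -symDet m`, hence `symDet m = 0` because
`R` is a `ℚ`-module.
-/

/-- The symmetrized product `r₁ ⊙ ⋯ ⊙ r_l = (1/l!) ∑_{σ'} r_{σ'(1)} ⋯ r_{σ'(l)}`. -/
noncomputable def symProd {R : Type*} [Ring R] [Algebra ℚ R] {l : ℕ} (r : Fin l → R) : R :=
  ((l.factorial : ℚ)⁻¹) • ∑ σ : Equiv.Perm (Fin l), (List.ofFn fun i => r (σ i)).prod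

/-- The symmetrized determinant `SymDet m = ∑_σ (-1)^σ (m_{1σ(1)} ⊙ ⋯ ⊙ m_{lσ(l)})`. -/
noncomputable def symDet {R : Type*} [Ring R] [Algebra ℚ R] {l : ℕ}
    (m : Matrix (Fin l) (Fin l) R) : R :=
  ∑ σ : Equiv.Perm (Fin l), (Equiv.Perm.sign σ : ℤ) • symProd (fun i => m i (σ i))

theorem symProd_comp_perm {R : Type*} [Ring R] [Algebra ℚ R] {l : ℕ} (r : Fin l → R)
    (τ : Equiv.Perm (Fin l)) : symProd (r ∘ τ) = symProd r := by
  unfold symProd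
  congr 1
  exact Equiv.sum_comp (Equiv.mulLeft τ) fun σ : Equiv.Perm (Fin l) =>
    (List.ofFn fun i => r (σ i)).prod

theorem symDet_permute {R : Type*} [Ring R] [Algebra ℚ R] {l : ℕ}
    (m : Matrix (Fin l) (Fin l) R) (τ : Equiv.Perm (Fin l)) :
    symDet (m.submatrix τ id) = (Equiv.Perm.sign τ : ℤ) • symDet m := by
  unfold symDet
  rw [Finset.smul_sum, ← Equiv.sum_comp (Equiv.mulRight τ)]
  refine Fintype.sum_congr _ _ fun σ => ?_
  have reindex : (fun i => m.submatrix τ id i ((σ * τ) i)) = (fun j => m j (σ j)) ∘ τ := rfl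
  rw [Equiv.coe_mulRight, reindex, symProd_comp_perm, Equiv.Perm.sign_mul, Units.val_mul,
    mul_comm, mul_smul]

/-- `SymDet` is alternating in the rows: it vanishes when two rows agree, and
interchanging two rows changes the sign. -/
theorem symDet_alternating {R : Type*} [Ring R] [Algebra ℚ R] {l : ℕ}
    (m : Matrix (Fin l) (Fin l) R) :
    (∀ i j : Fin l, i ≠ j → m i = m j → symDet m = 0) ∧
    (∀ i j : Fin l, i ≠ j →
      symDet (m.submatrix (Equiv.swap i j) id) = - symDet m) := by
  have swap_rows : ∀ i j : Fin l, i ≠ j →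
      symDet (m.submatrix (Equiv.swap i j) id) = - symDet m := fun i j hij => by
    rw [symDet_permute, Equiv.Perm.sign_swap hij, Units.val_neg, Units.val_one, neg_one_zsmul]
  refine ⟨fun i j hij hrow => ?_, swap_rows⟩
  have swap_fixes : m.submatrix (Equiv.swap i j) id = m := funext (Equiv.apply_swap_eq_self hrow)
  have self_eq_neg_self : symDet m = -symDet m := by
    simpa only [swap_fixes] using swap_rows i j hij
  have : IsAddTorsionFree R := .of_module_rat R
  exact self_eq_neg.mp self_eq_neg_self
end

section
/- Let R be a ring in which m! is invertible and ∂ a derivation of R. For an m×m matrix M(t) with entries differentiable in t and values in R, the derivative of the symmetrized determinant satisfies: ∂ SymDet(M) = Σ_{ν=1}^{m} SymDet(M with its ν-th row replaced by the ∂-derivative of that row). -/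
theorem leibniz_list_prod_ofFn {R : Type*} [Ring R] (d : R → R)
    (hmul : ∀ x y, d (x * y) = d x * y + x * d y) {l : ℕ} (f : Fin l → R) :
    d (List.ofFn f).prod = ∑ j, (List.ofFn (Function.update f j (d (f j)))).prod := by
  induction l with
  | zero =>
    have hd1 : d 1 = 0 := by simpa using hmul 1 1
    simp [hd1]
  | succ n ih =>
    have htail (j : Fin n) : (fun i => Function.update f j.succ (d (f j.succ)) i.succ)
        = Function.update (fun i => f i.succ) j (d (f j.succ)) :=
      Function.update_comp_eq_of_injective f (Fin.succ_injective n) j _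
    simp [List.ofFn_succ, hmul, ih, Fin.sum_univ_succ, Finset.mul_sum, htail,
      Function.update_of_ne (Fin.succ_ne_zero _).symm]

theorem leibniz_symProd {R : Type*} [Ring R] [Algebra ℚ R] (D : R →+ R)
    (hmul : ∀ x y, D (x * y) = D x * y + x * D y) {l : ℕ} (r : Fin l → R) :
    D (symProd r) = ∑ j, symProd (Function.update r j (D (r j))) := by
  have hperm (σ : Equiv.Perm (Fin l)) :
      D (List.ofFn fun i => r (σ i)).prod
        = ∑ j, (List.ofFn fun i => Function.update r j (D (r j)) (σ i)).prod := by
    rw [leibniz_list_prod_ofFn D hmul]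
    exact Fintype.sum_equiv σ _ _ fun j => congrArg (fun g => (List.ofFn g).prod)
      (Function.update_comp_eq_of_injective r σ.injective j _).symm
  simp only [symProd, map_rat_smul, map_sum, Finset.smul_sum]
  rw [Finset.sum_comm]
  simp only [hperm, Finset.smul_sum]

/-- Leibniz rule for the symmetrized determinant: for a derivation `d`,
`d (SymDet M) = ∑_ν SymDet(M with ν-th row replaced by its `d`-derivative)`. -/
theorem symDet_leibniz {R : Type*} [Ring R] [Algebra ℚ R] {m : ℕ} (d : R → R)
    (hadd : ∀ x y, d (x + y) = d x + d y)
    (hmul : ∀ x y, d (x * y) = d x * y + x * d y)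
    (M : Matrix (Fin m) (Fin m) R) :
    d (symDet M) = ∑ ν : Fin m, symDet (M.updateRow ν (fun j => d (M ν j))) := by
  let D : R →+ R := AddMonoidHom.mk' d hadd
  have hrow (σ : Equiv.Perm (Fin m)) (ν : Fin m) :
      Function.update (fun i => M i (σ i)) ν (d (M ν (σ ν)))
        = fun i => M.updateRow ν (fun j => d (M ν j)) i (σ i) := by
    ext i; by_cases h : i = ν <;> simp [Matrix.updateRow_apply, h]
  change D (symDet M) = _
  simp only [symDet, map_sum, map_zsmul, leibniz_symProd D hmul, Finset.smul_sum]
  rw [Finset.sum_comm]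
  simp only [D, AddMonoidHom.mk'_apply, hrow]
end
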